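/- arXiv:1802.01098 — 5 statements merged into one kernel-verified Lean document; each statement's English description precedes it below -/
import Mathlib

section
/- Let G be a nilpotent group and H a subgroup of G, and let π be a set of primes. Then the π-isolator I_π(H) = {g ∈ G : g^n ∈ H for some π-number n}, where a π-number is a positive integer all of whose prime factors lie in π, is a subgroup of G. -/
/-! If `x ^ a` and `y ^ b` lie in `H`, put `n = a * b` and work in `K = ⟨x, y⟩` with `A = H ∩ K`.
As `K / [K, K]` is abelian and generated by the images of `x` and `y`, every `n`-th power in `K`
lies in `A [K, K]`. One then descends the lower central series of `K`: modulo `γ (i + 2)` the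
subgroup `γ (i + 1)` is central and generated by commutators `⁅u, w⁆`, and a power of `⁅u, w⁆`
equals a commutator of elements of `A`, once `u` and `w` are replaced by powers lying in
`A γ (i + 1)`. Exponents only ever get multiplied, so they stay `π`-numbers. -/

def IsPiNumber (π : Set ℕ) (n : ℕ) : Prop :=
  0 < n ∧ ∀ p : ℕ, p.Prime → p ∣ n → p ∈ π

open Subgroup
open scoped commutatorElement

section Commutator

variable {G : Type*} [Group G]

theorem commutatorElement_mul_left_of_commute {a z : G} (g : G) (hz : Commute z g) :
    ⁅a * z, g⁆ = ⁅a, g⁆ := by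
  rw [commutatorElement_mul_left_eq_conj_mul, commutatorElement_eq_one_iff_commute.mpr hz,
    mul_one, mul_inv_cancel, one_mul]

theorem commutatorElement_mul_right_of_commute {a z : G} (g : G) (hz : Commute g z) :
    ⁅g, a * z⁆ = ⁅g, a⁆ := by
  rw [commutatorElement_mul_right_eq_mul_conj, commutatorElement_eq_one_iff_commute.mpr hz,
    mul_one, mul_inv_cancel_right]

theorem commutatorElement_pow_left {u g : G} (h : Commute u ⁅u, g⁆) (m : ℕ) :
    ⁅u ^ m, g⁆ = ⁅u, g⁆ ^ m := by
  induction m with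
  | zero => simp
  | succ m ih =>
    rw [pow_succ', commutatorElement_mul_left_eq_conj_mul, ih, (h.pow_right m).eq,
      mul_inv_cancel_right, pow_succ]

theorem commutatorElement_pow_right {g u : G} (h : Commute u ⁅g, u⁆) (m : ℕ) :
    ⁅g, u ^ m⁆ = ⁅g, u⁆ ^ m := by
  have h' : Commute u ⁅u, g⁆ := by rw [← commutatorElement_inv]; exact h.inv_right
  rw [← commutatorElement_inv, commutatorElement_pow_left h', ← commutatorElement_inv, inv_pow,
    inv_inv]

end Commutator

section Roots

variable {G : Type*} [Group G] {S : Submonoid ℕ} {A : Subgroup G}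

theorem Commute.exists_pow_mem_mul {g h : G} (hc : Commute g h) (hg : ∃ m ∈ S, g ^ m ∈ A)
    (hh : ∃ m ∈ S, h ^ m ∈ A) : ∃ m ∈ S, (g * h) ^ m ∈ A := by
  obtain ⟨m, hm, hgm⟩ := hg
  obtain ⟨k, hk, hhk⟩ := hh
  refine ⟨m * k, S.mul_mem hm hk, ?_⟩
  rw [hc.mul_pow, pow_mul, mul_comm m, pow_mul]
  exact A.mul_mem (A.pow_mem hgm k) (A.pow_mem hhk m)

theorem exists_pow_mem_of_mem_closure {X : Set G} (hX : X ⊆ center G)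
    (h : ∀ x ∈ X, ∃ m ∈ S, x ^ m ∈ A) {g : G} (hg : g ∈ closure X) :
    ∃ m ∈ S, g ^ m ∈ A := by
  have hXc : closure X ≤ center G := (closure_le _).mpr hX
  induction hg using closure_induction with
  | mem x hx => exact h x hx
  | one => exact ⟨1, S.one_mem, by simp⟩
  | mul x y _ hy ihx ihy =>
    exact Commute.exists_pow_mem_mul (mem_center_iff.mp (hXc hy) x) ihx ihy
  | inv x _ ih =>
    obtain ⟨m, hm, hxm⟩ := ih
    exact ⟨m, hm, by rw [inv_pow]; exact A.inv_mem hxm⟩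

theorem exists_pow_mem_of_lowerCentralSeries_eq_bot {i : ℕ}
    (hbot : (⊤ : Subgroup G).lowerCentralSeries (i + 2) = ⊥)
    (h : ∀ g : G, ∃ m ∈ S, g ^ m ∈ A ⊔ (⊤ : Subgroup G).lowerCentralSeries (i + 1)) (g : G) :
    ∃ m ∈ S, g ^ m ∈ A := by
  set L := (⊤ : Subgroup G).lowerCentralSeries (i + 1)
  have hLc : L ≤ center G := fun z hz => mem_center_iff.mpr fun w => by
    have hzw : ⁅z, w⁆ ∈ (⊤ : Subgroup G).lowerCentralSeries (i + 2) :=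
      commutator_mem_commutator hz (mem_top w)
    rw [hbot, mem_bot, commutatorElement_eq_one_iff_mul_comm] at hzw
    exact hzw.symm
  have hsplit : ∀ g : G, ∃ m ∈ S, ∃ a ∈ A, ∃ z ∈ L, a * z = g ^ m := fun g => by
    obtain ⟨m, hm, hgm⟩ := h g
    exact ⟨m, hm, mem_sup_of_normal_right.mp hgm⟩
  have hgen : ∀ u ∈ (⊤ : Subgroup G).lowerCentralSeries i, ∀ w : G,
      ∃ m ∈ S, ⁅u, w⁆ ^ m ∈ A := fun u hu w => by
    have huw : ⁅u, w⁆ ∈ center G := hLc (commutator_mem_commutator hu (mem_top w))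
    obtain ⟨m, hm, a, ha, z, hz, hu⟩ := hsplit u
    obtain ⟨k, hk, b, hb, y, hy, hw⟩ := hsplit w
    have h₁ : ⁅u, w⁆ ^ m = ⁅a, w⁆ := by
      rw [← commutatorElement_pow_left (mem_center_iff.mp huw u), ← hu,
        commutatorElement_mul_left_of_commute w (mem_center_iff.mp (hLc hz) w).symm]
    have haw : ⁅a, w⁆ ∈ center G := h₁ ▸ pow_mem huw m
    have h₂ : ⁅a, w⁆ ^ k = ⁅a, b⁆ := by
      rw [← commutatorElement_pow_right (mem_center_iff.mp haw w), ← hw,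
        commutatorElement_mul_right_of_commute a (mem_center_iff.mp (hLc hy) a)]
    refine ⟨m * k, S.mul_mem hm hk, ?_⟩
    rw [pow_mul, h₁, h₂, commutatorElement_def]
    exact A.mul_mem (A.mul_mem (A.mul_mem ha hb) (A.inv_mem ha)) (A.inv_mem hb)
  have hL : ∀ z ∈ L, ∃ m ∈ S, z ^ m ∈ A := fun z hz => by
    rw [Subgroup.mem_lowerCentralSeries_succ_iff] at hz
    refine exists_pow_mem_of_mem_closure ?_ ?_ hz
    · rintro _ ⟨u, hu, w, -, rfl⟩
      exact hLc (commutator_mem_commutator hu (mem_top w))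
    · rintro _ ⟨u, hu, w, -, rfl⟩
      exact hgen u hu w
  obtain ⟨m, hm, a, ha, z, hz, hg⟩ := hsplit g
  obtain ⟨k, hk, hk'⟩ := Commute.exists_pow_mem_mul (mem_center_iff.mp (hLc hz) a)
    ⟨1, S.one_mem, by rwa [pow_one]⟩ (hL z hz)
  exact ⟨m * k, S.mul_mem hm hk, by rwa [pow_mul, ← hg]⟩

end Roots

section Nilpotent

variable {G : Type*} [Group G] {S : Submonoid ℕ} {A : Subgroup G}

theorem exists_pow_mem_sup_lowerCentralSeries_succ {i : ℕ}
    (h : ∀ g : G, ∃ m ∈ S, g ^ m ∈ A ⊔ (⊤ : Subgroup G).lowerCentralSeries (i + 1)) (g : G) :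
    ∃ m ∈ S, g ^ m ∈ A ⊔ (⊤ : Subgroup G).lowerCentralSeries (i + 2) := by
  set N := (⊤ : Subgroup G).lowerCentralSeries (i + 2)
  set f := QuotientGroup.mk' N
  have hf : Function.Surjective f := QuotientGroup.mk'_surjective N
  have hmap : ∀ n, ((⊤ : Subgroup G).lowerCentralSeries n).map f =
      (⊤ : Subgroup (G ⧸ N)).lowerCentralSeries n := fun n => by
    rw [map_lowerCentralSeries, map_top_of_surjective f hf]
  have hbot : (⊤ : Subgroup (G ⧸ N)).lowerCentralSeries (i + 2) = ⊥ := by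
    rw [← hmap, Subgroup.map_eq_bot_iff, QuotientGroup.ker_mk']
  have hQ : ∀ v : G ⧸ N, ∃ m ∈ S,
      v ^ m ∈ A.map f ⊔ (⊤ : Subgroup (G ⧸ N)).lowerCentralSeries (i + 1) := fun v => by
    obtain ⟨g, rfl⟩ := hf v
    obtain ⟨m, hm, hgm⟩ := h g
    refine ⟨m, hm, ?_⟩
    rw [← map_pow, ← hmap, ← Subgroup.map_sup]
    exact mem_map_of_mem f hgm
  obtain ⟨m, hm, hgm⟩ := exists_pow_mem_of_lowerCentralSeries_eq_bot hbot hQ (f g)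
  refine ⟨m, hm, ?_⟩
  rw [← map_pow] at hgm
  rw [← QuotientGroup.ker_mk' N, ← comap_map_eq]
  exact hgm

theorem exists_pow_mem_of_exists_pow_mem_sup_commutator [Group.IsNilpotent G]
    (h : ∀ g : G, ∃ m ∈ S, g ^ m ∈ A ⊔ commutator G) (g : G) : ∃ m ∈ S, g ^ m ∈ A := by
  obtain ⟨n, hn⟩ := Subgroup.nilpotent_iff_lowerCentralSeries.mp ‹Group.IsNilpotent G›
  have hstep : ∀ i, ∀ g : G,
      ∃ m ∈ S, g ^ m ∈ A ⊔ (⊤ : Subgroup G).lowerCentralSeries (i + 1) := by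
    intro i
    induction i with
    | zero => simpa only [zero_add, top_lowerCentralSeries_one] using h
    | succ i ih => exact exists_pow_mem_sup_lowerCentralSeries_succ ih
  have hbot : (⊤ : Subgroup G).lowerCentralSeries (n + 1) = ⊥ :=
    le_bot_iff.mp (hn ▸ Subgroup.lowerCentralSeries_antitone _ n.le_succ)
  simpa only [hbot, sup_bot_eq] using hstep n g

end Nilpotent

theorem pow_mem_sup_commutator_of_closure_eq_top {G : Type*} [Group G] {A : Subgroup G}
    {X : Set G} (hX : closure X = ⊤) {n : ℕ} (h : ∀ x ∈ X, x ^ n ∈ A) (g : G) :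
    g ^ n ∈ A ⊔ commutator G := by
  let W := (A.map Abelianization.of).comap ((powMonoidHom n).comp Abelianization.of)
  have hW : closure X ≤ W := (closure_le _).mpr fun x hx => by
    change Abelianization.of x ^ n ∈ A.map Abelianization.of
    rw [← map_pow]
    exact mem_map_of_mem _ (h x hx)
  have hg : Abelianization.of (g ^ n) ∈ A.map Abelianization.of := by
    rw [map_pow]
    exact hW (hX ▸ mem_top g)
  rwa [← Abelianization.ker_of, ← comap_map_eq]

theorem exists_pow_mul_mem_of_isNilpotent {G : Type*} [Group G] [Group.IsNilpotent G]
    {S : Submonoid ℕ} {H : Subgroup G} {x y : G} (hx : ∃ m ∈ S, x ^ m ∈ H)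
    (hy : ∃ m ∈ S, y ^ m ∈ H) : ∃ m ∈ S, (x * y) ^ m ∈ H := by
  obtain ⟨a, ha, hxa⟩ := hx
  obtain ⟨b, hb, hyb⟩ := hy
  let K := closure ({x, y} : Set G)
  have hX : ∀ z ∈ ((↑) : K → G) ⁻¹' {x, y}, z ^ (a * b) ∈ H.subgroupOf K := by
    rintro z (hz | hz) <;> rw [mem_subgroupOf, coe_pow, hz]
    · rw [pow_mul]; exact H.pow_mem hxa b
    · rw [mul_comm, pow_mul]; exact H.pow_mem hyb a
  have hxK : x ∈ K := subset_closure (by simp)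
  have hyK : y ∈ K := subset_closure (by simp)
  obtain ⟨m, hm, hxy⟩ := exists_pow_mem_of_exists_pow_mem_sup_commutator
    (fun g => ⟨a * b, S.mul_mem ha hb, pow_mem_sup_commutator_of_closure_eq_top
      closure_closure_coe_preimage hX g⟩) (⟨x * y, K.mul_mem hxK hyK⟩ : K)
  exact ⟨m, hm, hxy⟩

def Subgroup.isolator {G : Type*} [Group G] [Group.IsNilpotent G] (S : Submonoid ℕ)
    (H : Subgroup G) : Subgroup G where
  carrier := {g | ∃ m ∈ S, g ^ m ∈ H}
  one_mem' := ⟨1, S.one_mem, by simp⟩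
  mul_mem' := exists_pow_mul_mem_of_isNilpotent
  inv_mem' := fun ⟨m, hm, hgm⟩ => ⟨m, hm, by rw [inv_pow]; exact H.inv_mem hgm⟩

def piNumbers (π : Set ℕ) : Submonoid ℕ where
  carrier := {n | IsPiNumber π n}
  one_mem' := ⟨one_pos, fun _ hp hd => absurd (Nat.dvd_one.mp hd) hp.ne_one⟩
  mul_mem' := fun ha hb => ⟨Nat.mul_pos ha.1 hb.1, fun p hp hd =>
    ((Nat.Prime.dvd_mul hp).mp hd).elim (ha.2 p hp) (hb.2 p hp)⟩

theorem pi_isolator_is_subgroup (G : Type*) [Group G] [Group.IsNilpotent G]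
    (π : Set ℕ) (H : Subgroup G) :
    ∃ K : Subgroup G, (K : Set G) = {g : G | ∃ n : ℕ, IsPiNumber π n ∧ g ^ n ∈ H} :=
  ⟨H.isolator (piNumbers π), rfl⟩
end

section
/- Let G be a finitely generated nilpotent group with generators g_1, …, g_n, and let H be a subgroup of G such that g_i^{r_i} ∈ H for some positive π-numbers r_i (i = 1, …, n). Then every element of G has some positive π-power lying in H, and the index [G : H] is a finite π-number. -/
/-!
Write `I(K)` for the π-isolator of `K`, the set of elements having a π-power in `K`. Its central
elements form a subgroup, and `I(K ⊔ C) = I(K)` whenever `C` is a central subgroup inside `I(K)`.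
Modulo `γ_{k+1}` the image of `γ_k` is central and, for `a ∈ γ_{k-1}`, the commutator `⁅a, ·⁆` is
bimultiplicative: `⁅a, y⁆ ^ (m * r) = ⁅a ^ m, y ^ r⁆`. If `a ^ m = h z` and `y ^ r = h' z'` with
`h, h' ∈ H` and `z, z'` central, this is `⁅h, h'⁆ ∈ H`. So `I(H ⊔ γ_k) = G` propagates along the
lower central series down to `I(H) = G`. For the index, pass to `G ⧸ Z(G)`: the remaining factor
`[H Z : H] = [Z : H ∩ Z]` is the order of an abelian π-torsion group, finitely generated by
Schreier's lemma, hence a π-number.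
-/

theorem isPiNumber_one (π : Set ℕ) : IsPiNumber π 1 :=
  ⟨Nat.one_pos, fun _ hp hdvd => absurd (Nat.le_of_dvd Nat.one_pos hdvd) hp.one_lt.not_ge⟩

theorem IsPiNumber.mul {π : Set ℕ} {a b : ℕ} (ha : IsPiNumber π a) (hb : IsPiNumber π b) :
    IsPiNumber π (a * b) :=
  ⟨Nat.mul_pos ha.1 hb.1, fun p hp hdvd => (hp.dvd_mul.mp hdvd).elim (ha.2 p hp) (hb.2 p hp)⟩

theorem isPiNumber_card_of_forall_pow_eq_one {π : Set ℕ} {A : Type*} [CommGroup A] [Group.FG A]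
    (h : ∀ a : A, ∃ m, IsPiNumber π m ∧ a ^ m = 1) : IsPiNumber π (Nat.card A) := by
  have : Finite A := CommGroup.finite_of_fg_isMulTorsion _ fun a =>
    let ⟨m, hm, ham⟩ := h a
    isOfFinOrder_iff_pow_eq_one.mpr ⟨m, hm.1, ham⟩
  refine ⟨Nat.card_pos, fun p hp hdvd => ?_⟩
  have : Fact p.Prime := ⟨hp⟩
  obtain ⟨a, ha⟩ := exists_prime_orderOf_dvd_card' p hdvd
  obtain ⟨m, hm, ham⟩ := h a
  exact hm.2 p hp (ha ▸ orderOf_dvd_of_pow_eq_one ham)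

open scoped commutatorElement

section Commutator

open Subgroup

variable {G : Type*} [Group G]

theorem commutatorElement_mul_center_mul_center {a b z w : G} (hz : z ∈ center G)
    (hw : w ∈ center G) : ⁅a * z, b * w⁆ = ⁅a, b⁆ := by
  have hz1 : ⁅z, b * w⁆ = 1 :=
    commutatorElement_eq_one_iff_mul_comm.mpr (mem_center_iff.mp hz _).symm
  have hw1 : ⁅a, w⁆ = 1 := commutatorElement_eq_one_iff_mul_comm.mpr (mem_center_iff.mp hw a)
  rw [commutatorElement_mul_left_eq_conj_mul, hz1, commutatorElement_mul_right_eq_mul_conj, hw1]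
  group

theorem commutatorElement_pow_right_s2 {a : G} (ha : ∀ y, ⁅a, y⁆ ∈ center G) (y : G) :
    ∀ r : ℕ, ⁅a, y ^ r⁆ = ⁅a, y⁆ ^ r
  | 0 => by rw [pow_zero, pow_zero, commutatorElement_one_right]
  | r + 1 => by
    rw [pow_succ, commutatorElement_mul_right_eq_mul_conj, mul_assoc _ (y ^ r),
      mem_center_iff.mp (ha y), ← mul_assoc, mul_inv_cancel_right,
      commutatorElement_pow_right_s2 ha y r, pow_succ]

theorem commutatorElement_pow_left_s2 {a y : G} (ha : ⁅a, y⁆ ∈ center G) :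
    ∀ m : ℕ, ⁅a ^ m, y⁆ = ⁅a, y⁆ ^ m
  | 0 => by rw [pow_zero, pow_zero, commutatorElement_one_left]
  | m + 1 => by
    rw [pow_succ', commutatorElement_mul_left_eq_conj_mul, commutatorElement_pow_left_s2 ha m,
      mem_center_iff.mp (pow_mem ha m), mul_inv_cancel_right, pow_succ]

end Commutator

namespace Subgroup

variable {G G' : Type*} [Group G] [Group G'] {π : Set ℕ} {K : Subgroup G}

def piIsolator (π : Set ℕ) (K : Subgroup G) : Set G :=
  {x | ∃ m, IsPiNumber π m ∧ x ^ m ∈ K}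

theorem mem_piIsolator_of_mem {x : G} (hx : x ∈ K) : x ∈ K.piIsolator π :=
  ⟨1, isPiNumber_one π, by rwa [pow_one]⟩

theorem piIsolator_mono {L : Subgroup G} (hKL : K ≤ L) : K.piIsolator π ⊆ L.piIsolator π :=
  fun _ ⟨m, hm, hxm⟩ => ⟨m, hm, hKL hxm⟩

theorem inv_mem_piIsolator {x : G} (hx : x ∈ K.piIsolator π) : x⁻¹ ∈ K.piIsolator π :=
  let ⟨m, hm, hxm⟩ := hx
  ⟨m, hm, by rw [inv_pow]; exact K.inv_mem hxm⟩

theorem mem_piIsolator_of_pow_mem_piIsolator {x : G} {m : ℕ} (hm : IsPiNumber π m)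
    (hx : x ^ m ∈ K.piIsolator π) : x ∈ K.piIsolator π :=
  let ⟨k, hk, hxk⟩ := hx
  ⟨m * k, hm.mul hk, by rwa [pow_mul]⟩

theorem _root_.Commute.mul_mem_piIsolator {x y : G} (hxy : Commute x y)
    (hx : x ∈ K.piIsolator π) (hy : y ∈ K.piIsolator π) : x * y ∈ K.piIsolator π := by
  obtain ⟨m, hm, hxm⟩ := hx
  obtain ⟨k, hk, hyk⟩ := hy
  refine ⟨m * k, hm.mul hk, ?_⟩
  rw [hxy.mul_pow, pow_mul, mul_comm m k, pow_mul]
  exact K.mul_mem (K.pow_mem hxm k) (K.pow_mem hyk m)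

theorem map_mem_piIsolator_map (f : G →* G') {x : G} (hx : x ∈ K.piIsolator π) :
    f x ∈ (K.map f).piIsolator π :=
  let ⟨m, hm, hxm⟩ := hx
  ⟨m, hm, by rw [← map_pow]; exact mem_map_of_mem f hxm⟩

theorem map_mem_piIsolator_map_iff (f : G →* G') {x : G} :
    f x ∈ (K.map f).piIsolator π ↔ x ∈ (K ⊔ f.ker).piIsolator π := by
  simp only [piIsolator, Set.mem_ofPred_eq, ← comap_map_eq, mem_comap, map_pow]

def centralPiIsolator (π : Set ℕ) (K : Subgroup G) : Subgroup G where
  carrier := (center G : Set G) ∩ K.piIsolator π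
  one_mem' := ⟨one_mem _, mem_piIsolator_of_mem K.one_mem⟩
  mul_mem' := fun ⟨hxZ, hx⟩ ⟨hyZ, hy⟩ =>
    ⟨mul_mem hxZ hyZ, (show Commute _ _ from mem_center_iff.mp hyZ _).mul_mem_piIsolator hx hy⟩
  inv_mem' := fun ⟨hxZ, hx⟩ => ⟨inv_mem hxZ, inv_mem_piIsolator hx⟩

theorem centralPiIsolator_le_center : K.centralPiIsolator π ≤ center G :=
  fun _ hx => hx.1

theorem exists_mul_eq_of_mem_sup_of_le_center {C : Subgroup G} (hC : C ≤ center G) {x : G}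
    (hx : x ∈ K ⊔ C) : ∃ h ∈ K, ∃ c ∈ C, h * c = x := by
  rw [← SetLike.mem_coe,
    coe_mul_of_right_le_normalizer_left K C (hC.trans (center_le_normalizer _))] at hx
  exact hx

theorem mem_piIsolator_of_mem_piIsolator_sup {C : Subgroup G} (hC : C ≤ K.centralPiIsolator π)
    {x : G} (hx : x ∈ (K ⊔ C).piIsolator π) : x ∈ K.piIsolator π := by
  obtain ⟨m, hm, hxm⟩ := hx
  obtain ⟨h, hh, c, hc, hhc⟩ := exists_mul_eq_of_mem_sup_of_le_center
    (hC.trans centralPiIsolator_le_center) hxm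
  refine mem_piIsolator_of_pow_mem_piIsolator hm (hhc ▸ ?_)
  exact (show Commute h c from mem_center_iff.mp (hC hc).1 h).mul_mem_piIsolator
    (mem_piIsolator_of_mem hh) (hC hc).2

theorem commutatorElement_mem_piIsolator {a y : G} (ha : ∀ z, ⁅a, z⁆ ∈ center G)
    (haK : a ∈ (K ⊔ center G).piIsolator π) (hyK : y ∈ (K ⊔ center G).piIsolator π) :
    ⁅a, y⁆ ∈ K.piIsolator π := by
  obtain ⟨m, hm, ham⟩ := haK
  obtain ⟨r, hr, hyr⟩ := hyK
  obtain ⟨h, hh, z, hz, hhz⟩ := exists_mul_eq_of_mem_sup_of_le_center le_rfl ham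
  obtain ⟨h', hh', w, hw, hhw⟩ := exists_mul_eq_of_mem_sup_of_le_center le_rfl hyr
  refine ⟨r * m, hr.mul hm, ?_⟩
  rw [pow_mul, ← commutatorElement_pow_right_s2 ha, ← commutatorElement_pow_left_s2 (ha _), ← hhz,
    ← hhw, commutatorElement_mul_center_mul_center hz hw, commutatorElement_def]
  exact mul_mem (mul_mem (mul_mem hh hh') (inv_mem hh)) (inv_mem hh')

theorem commutator_top_le_centralPiIsolator {D : Subgroup G} (hD : ⁅D, ⊤⁆ ≤ center G)
    (hK : ∀ x, x ∈ (K ⊔ center G).piIsolator π) : ⁅D, ⊤⁆ ≤ K.centralPiIsolator π :=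
  commutator_le.mpr fun a ha y hy =>
    ⟨hD (commutator_mem_commutator ha hy),
      commutatorElement_mem_piIsolator (fun z => hD (commutator_mem_commutator ha (mem_top z)))
        (hK a) (hK y)⟩

local notation "γ" => lowerCentralSeries (⊤ : Subgroup G)

theorem map_lowerCentralSeries_le_center (k : ℕ) :
    (γ k).map (QuotientGroup.mk' (γ (k + 1))) ≤ center (G ⧸ γ (k + 1)) := by
  rintro _ ⟨z, hz, rfl⟩
  refine mem_center_iff.mpr fun q => ?_
  induction q using QuotientGroup.induction_on with
  | H y =>
    refine (commutatorElement_eq_one_iff_mul_comm.mp ?_).symm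
    rw [← QuotientGroup.mk'_apply, ← map_commutatorElement, QuotientGroup.mk'_apply,
      QuotientGroup.eq_one_iff]
    exact commutator_mem_commutator hz (mem_top y)

theorem piIsolator_sup_lowerCentralSeries_eq_univ {S : Set G} (hS : closure S = ⊤)
    (hSK : S ⊆ K.piIsolator π) (k : ℕ) : (K ⊔ γ k).piIsolator π = Set.univ := by
  induction k with
  | zero => exact Set.eq_univ_of_forall fun x => mem_piIsolator_of_mem (mem_sup_right (mem_top x))
  | succ k ih =>
    set φ := QuotientGroup.mk' (γ (k + 1))
    have hφ : Function.Surjective φ := QuotientGroup.mk'_surjective _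
    have hC : (γ k).map φ ≤ center _ := map_lowerCentralSeries_le_center k
    have hQ : ∀ q, q ∈ (K.map φ ⊔ (γ k).map φ).piIsolator π := by
      intro q
      obtain ⟨x, rfl⟩ := hφ q
      rw [← map_sup]
      exact map_mem_piIsolator_map φ (ih ▸ Set.mem_univ x)
    have hCK : (γ k).map φ ≤ (K.map φ).centralPiIsolator π := by
      cases k with
      | zero =>
        have hS' : (γ 0).map φ = closure (φ '' S) := by
          rw [← MonoidHom.map_closure, hS]; rfl
        rw [hS', closure_le]
        rintro _ ⟨s, hs, rfl⟩
        exact ⟨hC (hS' ▸ subset_closure ⟨s, hs, rfl⟩), map_mem_piIsolator_map φ (hSK hs)⟩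
      | succ j =>
        have hγ : (γ (j + 1)).map φ = ⁅(γ j).map φ, ⊤⁆ := by
          rw [← map_top_of_surjective φ hφ, ← map_commutator]; rfl
        rw [hγ]
        exact commutator_top_le_centralPiIsolator (hγ ▸ hC)
          fun q => piIsolator_mono (sup_le_sup_left hC _) (hQ q)
    refine Set.eq_univ_of_forall fun x => ?_
    rw [← QuotientGroup.ker_mk' (γ (k + 1)), ← map_mem_piIsolator_map_iff]
    exact mem_piIsolator_of_mem_piIsolator_sup hCK (hQ _)

open scoped IsMulCommutative in
theorem isPiNumber_index_of_isPiNumber_index_sup_center [Group.FG G]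
    (hK : ∀ x ∈ center G, x ∈ K.piIsolator π) (hidx : IsPiNumber π (K ⊔ center G).index) :
    IsPiNumber π K.index := by
  have : (center G ⊔ K).FiniteIndex := ⟨sup_comm K (center G) ▸ hidx.1.ne'⟩
  have hZK : center G ≤ normalizer K := center_le_normalizer _
  have : (K.subgroupOf (center G ⊔ K)).Normal := normal_subgroupOf_sup_of_le_normalizer hZK
  let e := QuotientGroup.quotientInfEquivProdNormalizerQuotient (center G) K hZK
  have : Group.FG (center G ⧸ K.subgroupOf (center G)) :=
    Group.fg_of_surjective (f := e.symm.toMonoidHom) e.symm.surjective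
  have hZ : IsPiNumber π (K.relIndex (center G)) := by
    refine isPiNumber_card_of_forall_pow_eq_one fun q => ?_
    induction q using QuotientGroup.induction_on with
    | H z =>
      obtain ⟨m, hm, hzm⟩ := hK z z.2
      exact ⟨m, hm, (QuotientGroup.eq_one_iff _).mpr (by rwa [mem_subgroupOf, coe_pow])⟩
  have hrel : K.relIndex (center G) = K.relIndex (K ⊔ center G) :=
    (Nat.card_congr e.toEquiv).trans (by rw [sup_comm]; rfl)
  rw [← relIndex_mul_index (le_sup_left : K ≤ K ⊔ center G), ← hrel]
  exact hZ.mul hidx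

theorem mem_piIsolator_of_closure_eq_top [Group.IsNilpotent G] {S : Set G} (hS : closure S = ⊤)
    (hSK : S ⊆ K.piIsolator π) (x : G) : x ∈ K.piIsolator π := by
  obtain ⟨c, hc⟩ := nilpotent_iff_lowerCentralSeries.mp ‹Group.IsNilpotent G›
  have := piIsolator_sup_lowerCentralSeries_eq_univ hS hSK c
  rw [hc, sup_bot_eq] at this
  exact this ▸ Set.mem_univ x

theorem isPiNumber_index_of_forall_mem_piIsolator [Group.IsNilpotent G] [Group.FG G]
    (hK : ∀ x, x ∈ K.piIsolator π) : IsPiNumber π K.index := by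
  refine Group.nilpotent_center_quotient_ind (P := fun G _ _ => ∀ [Group.FG G] (K : Subgroup G),
    (∀ x, x ∈ K.piIsolator π) → IsPiNumber π K.index) G ?_ ?_ K hK
  · intro G _ _ _ K _
    rw [Subsingleton.elim K ⊤, index_top]
    exact isPiNumber_one π
  · intro G _ _ ih _ K hK
    set φ := QuotientGroup.mk' (center G)
    have hφ : Function.Surjective φ := QuotientGroup.mk'_surjective _
    have hidx : (K ⊔ center G).index = (K.map φ).index := by
      rw [← index_comap_of_surjective _ hφ, comap_map_eq, QuotientGroup.ker_mk']
    refine isPiNumber_index_of_isPiNumber_index_sup_center (fun x _ => hK x) (hidx ▸ ih _ ?_)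
    intro q
    obtain ⟨x, rfl⟩ := hφ q
    exact map_mem_piIsolator_map φ (hK x)

end Subgroup

theorem pi_power_in_subgroup_and_index_pi (G : Type*) [Group G] [Group.IsNilpotent G]
    (π : Set ℕ) (n : ℕ) (g : Fin n → G) (hgen : Subgroup.closure (Set.range g) = ⊤)
    (H : Subgroup G) (r : Fin n → ℕ) (hr : ∀ i, IsPiNumber π (r i))
    (hmem : ∀ i, g i ^ (r i) ∈ H) :
    (∀ x : G, ∃ m : ℕ, IsPiNumber π m ∧ x ^ m ∈ H) ∧ IsPiNumber π H.index := by
  have hiso : ∀ x, x ∈ H.piIsolator π := Subgroup.mem_piIsolator_of_closure_eq_top hgen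
    (Set.range_subset_iff.mpr fun i => ⟨r i, hr i, hmem i⟩)
  have : Group.FG G := Group.fg_iff.mpr ⟨_, hgen, Set.finite_range g⟩
  exact ⟨hiso, Subgroup.isPiNumber_index_of_forall_mem_piIsolator hiso⟩
end

section
/- Let H be a π-torsion-free nilpotent group and let x, y ∈ H. If x^n · y^m = y^m · x^n for some π-numbers m and n, then x · y = y · x. -/
/-!
Write `Z j` for the upper central series. Modulo `Z j`, a commutator `⁅x, z⁆ ∈ Z (j + 1)` is
central, so `⁅x ^ k, z⁆ ≡ ⁅x, z⁆ ^ k`. From this, induction on `j` shows that every factor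
`Z (j + 1) / Z j` inherits the absence of `k`-torsion from `G`. If `x ^ k` commutes with `z`,
then `⁅x, z⁆ ^ k ∈ Z j` whenever `⁅x, z⁆ ∈ Z (j + 1)`, so `⁅x, z⁆` descends the upper central
series from the top to `Z 0 = ⊥`. Applying this once to `x` and once to `y` gives the theorem.
-/

open scoped commutatorElement

namespace Subgroup

variable {G : Type*} [Group G] {j k : ℕ} {g x z : G}

lemma commutatorElement_pow_left_mul_inv_mem_upperCentralSeries
    (h : ⁅x, z⁆ ∈ upperCentralSeries G (j + 1)) (n : ℕ) :
    ⁅x ^ n, z⁆ * (⁅x, z⁆ ^ n)⁻¹ ∈ upperCentralSeries G j := by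
  induction n with
  | zero => simp
  | succ n ih =>
    have hconj : x * (⁅x ^ n, z⁆ * (⁅x, z⁆ ^ n)⁻¹) * x⁻¹ ∈ upperCentralSeries G j :=
      (upperCentralSeries G j).normal_of_characteristic.conj_mem _ ih x
    have hcomm : ⁅x, ⁅x, z⁆ ^ n⁆ ∈ upperCentralSeries G j := by
      rw [← commutatorElement_inv]
      exact inv_mem (mem_upperCentralSeries_succ_iff.mp (pow_mem h n) x)
    have hsucc : ⁅x ^ (n + 1), z⁆ = x * ⁅x ^ n, z⁆ * x⁻¹ * ⁅x, z⁆ := by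
      simp only [commutatorElement_def]
      group
    convert mul_mem hconj hcomm using 1
    rw [hsucc, commutatorElement_def x (⁅x, z⁆ ^ n)]
    generalize ⁅x ^ n, z⁆ = d
    generalize ⁅x, z⁆ = c
    group

lemma commutatorElement_pow_left_mem_upperCentralSeries_iff
    (h : ⁅x, z⁆ ∈ upperCentralSeries G (j + 1)) (n : ℕ) :
    ⁅x ^ n, z⁆ ∈ upperCentralSeries G j ↔ ⁅x, z⁆ ^ n ∈ upperCentralSeries G j := by
  simpa using
    mul_mem_cancel_left (commutatorElement_pow_left_mul_inv_mem_upperCentralSeries h n)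
      (y := ⁅x, z⁆ ^ n)

lemma mem_upperCentralSeries_of_pow_mem (hk : ∀ g : G, g ^ k = 1 → g = 1)
    (hg : g ∈ upperCentralSeries G (j + 1)) (hgk : g ^ k ∈ upperCentralSeries G j) :
    g ∈ upperCentralSeries G j := by
  induction j generalizing g with
  | zero => simpa using hk g (by simpa using hgk)
  | succ j ih =>
    intro y
    have hgy : ⁅g, y⁆ ∈ upperCentralSeries G (j + 1) := mem_upperCentralSeries_succ_iff.mp hg y
    exact ih hgy <| (commutatorElement_pow_left_mem_upperCentralSeries_iff hgy k).mp
      (mem_upperCentralSeries_succ_iff.mp hgk y)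

end Subgroup

lemma Commute.of_pow_left {G : Type*} [Group G] [Group.IsNilpotent G] {k : ℕ} {x z : G}
    (hk : ∀ g : G, g ^ k = 1 → g = 1) (h : Commute (x ^ k) z) : Commute x z := by
  have descend : ∀ j, ⁅x, z⁆ ∈ Subgroup.upperCentralSeries G j → ⁅x, z⁆ = 1 := by
    intro j
    induction j with
    | zero => simp
    | succ j ih =>
      intro hj
      refine ih (Subgroup.mem_upperCentralSeries_of_pow_mem hk hj ?_)
      rw [← Subgroup.commutatorElement_pow_left_mem_upperCentralSeries_iff hj,
        commutatorElement_eq_one_iff_commute.mpr h]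
      exact one_mem _
  obtain ⟨c, hc⟩ := Group.IsNilpotent.nilpotent G
  exact commutatorElement_eq_one_iff_commute.mp (descend c (hc ▸ Subgroup.mem_top _))

theorem commute_of_pi_powers_commute (H : Type*) [Group H] [Group.IsNilpotent H]
    (π : Set ℕ) (hTF : ∀ g : H, ∀ m : ℕ, IsPiNumber π m → g ^ m = 1 → g = 1)
    (x y : H) (m n : ℕ) (hm : IsPiNumber π m) (hn : IsPiNumber π n)
    (hcomm : x ^ n * y ^ m = y ^ m * x ^ n) :
    x * y = y * x := by
  have hx : Commute x (y ^ m) := Commute.of_pow_left (hTF · n hn) hcomm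
  exact (Commute.of_pow_left (hTF · m hm) hx.symm).symm
end

section
/- Let G be a nilpotent π-torsion-free group, n a π-number, and suppose x, y ∈ G satisfy x^n = y^n. Then x = y. -/
open scoped commutatorElement

section

variable {G : Type*} [Group G]

theorem commutatorElement_pow_left_of_commute {a b : G} (h : Commute ⁅a, b⁆ a) (m : ℕ) :
    ⁅a ^ m, b⁆ = ⁅a, b⁆ ^ m := by
  induction m with
  | zero => simp
  | succ m ih =>
    calc ⁅a ^ (m + 1), b⁆ = a * ⁅a ^ m, b⁆ * a⁻¹ * ⁅a, b⁆ := by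
          simp only [commutatorElement_def, pow_succ']; group
      _ = ⁅a, b⁆ ^ (m + 1) := by
          rw [ih, (h.pow_left m).eq.symm, pow_succ]; group

namespace Subgroup

theorem mk_mem_center_of_mem_upperCentralSeries_succ {i : ℕ} {t : G}
    (ht : t ∈ upperCentralSeries G (i + 1)) :
    (t : G ⧸ upperCentralSeries G i) ∈ center (G ⧸ upperCentralSeries G i) := by
  have ht' : t ∈ upperCentralSeriesStep (upperCentralSeries G i) := ht
  rwa [upperCentralSeriesStep_eq_comap_center] at ht'

theorem commutatorElement_pow_mem_upperCentralSeries {i m : ℕ} {g : G}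
    (hg : g ∈ upperCentralSeries G (i + 2)) (hgm : g ^ m ∈ upperCentralSeries G (i + 1)) (x : G) :
    ⁅g, x⁆ ^ m ∈ upperCentralSeries G i := by
  let f := QuotientGroup.mk' (upperCentralSeries G i)
  have hmem_iff (a : G) : a ∈ upperCentralSeries G i ↔ f a = 1 := by
    rw [← MonoidHom.mem_ker, QuotientGroup.ker_mk']
  have hcomm : Commute ⁅f g, f x⁆ (f g) := by
    rw [← map_commutatorElement]
    exact (mk_mem_center_of_mem_upperCentralSeries_succ
      (mem_upperCentralSeries_succ_iff.mp hg x)).comm (f g)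
  have hgm' : ⁅f g ^ m, f x⁆ = 1 := by
    rw [← map_pow, ← map_commutatorElement, ← hmem_iff]
    exact mem_upperCentralSeries_succ_iff.mp hgm x
  rw [hmem_iff, map_pow, map_commutatorElement, ← commutatorElement_pow_left_of_commute hcomm, hgm']

theorem mem_upperCentralSeries_of_pow_mem_s18 {m : ℕ} (hG : ∀ g : G, g ^ m = 1 → g = 1) :
    ∀ {i : ℕ} {g : G}, g ∈ upperCentralSeries G (i + 1) → g ^ m ∈ upperCentralSeries G i →
      g ∈ upperCentralSeries G i
  | 0, g, _, hgm => hG g hgm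
  | _ + 1, _, hg, hgm => mem_upperCentralSeries_succ_iff.mpr fun x =>
      mem_upperCentralSeries_of_pow_mem_s18 hG (mem_upperCentralSeries_succ_iff.mp hg x)
        (commutatorElement_pow_mem_upperCentralSeries hg hgm x)

theorem inv_mul_pow_mem_upperCentralSeries {i n : ℕ} {x y : G}
    (ht : x⁻¹ * y ∈ upperCentralSeries G (i + 1)) (h : x ^ n = y ^ n) :
    (x⁻¹ * y) ^ n ∈ upperCentralSeries G i := by
  let f := QuotientGroup.mk' (upperCentralSeries G i)
  have hcomm : Commute (f x) (f (x⁻¹ * y)) :=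
    ((mk_mem_center_of_mem_upperCentralSeries_succ ht).comm (f x)).symm
  have hy : f y = f x * f (x⁻¹ * y) := by rw [← map_mul, mul_inv_cancel_left]
  have hpow : f x ^ n * f (x⁻¹ * y) ^ n = f x ^ n := by
    rw [← hcomm.mul_pow, ← hy, ← map_pow, ← map_pow, h]
  rw [← QuotientGroup.ker_mk' (upperCentralSeries G i), MonoidHom.mem_ker, map_pow]
  exact mul_eq_left.mp hpow

end Subgroup

theorem pow_left_injective_of_isNilpotent [Group.IsNilpotent G] {n : ℕ}
    (hG : ∀ g : G, g ^ n = 1 → g = 1) : Function.Injective fun g : G => g ^ n := by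
  intro x y h
  have descend (i : ℕ) :
      x⁻¹ * y ∈ Subgroup.upperCentralSeries G i → x⁻¹ * y ∈ Subgroup.upperCentralSeries G 0 := by
    induction i with
    | zero => exact id
    | succ i ih =>
      intro ht
      exact ih (Subgroup.mem_upperCentralSeries_of_pow_mem_s18 hG ht
        (Subgroup.inv_mul_pow_mem_upperCentralSeries ht h))
  obtain ⟨c, hc⟩ := Group.IsNilpotent.nilpotent' (G := G)
  have hbot := descend c (hc ▸ Subgroup.mem_top _)
  rwa [Subgroup.upperCentralSeries_zero, Subgroup.mem_bot, inv_mul_eq_one] at hbot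

end

theorem pi_roots_unique (G : Type*) [Group G] [Group.IsNilpotent G] (π : Set ℕ)
    (hTF : ∀ g : G, ∀ m : ℕ, IsPiNumber π m → g ^ m = 1 → g = 1)
    (n : ℕ) (hn : IsPiNumber π n) (x y : G) (h : x ^ n = y ^ n) :
    x = y :=
  pow_left_injective_of_isNilpotent (fun g => hTF g n hn) h
end

section
/- Let G be a nilpotent group, π a set of primes, and N a normal subgroup of G. Then the quotient G/I_π(N) is π-torsion-free, where I_π(N) is the π-isolator of N in G. -/
theorem IsPiNumber.mul_s19 {π : Set ℕ} {m n : ℕ} (hm : IsPiNumber π m) (hn : IsPiNumber π n) :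
    IsPiNumber π (m * n) :=
  ⟨Nat.mul_pos hm.1 hn.1, fun p hp hpd => (hp.dvd_mul.mp hpd).elim (hm.2 p hp) (hn.2 p hp)⟩

def piIsolator {M : Type*} [Monoid M] (π : Set ℕ) (S : Set M) : Set M :=
  {g | ∃ n : ℕ, IsPiNumber π n ∧ g ^ n ∈ S}

theorem mem_piIsolator_of_pow_mem {M : Type*} [Monoid M] {π : Set ℕ} {S : Set M} {g : M}
    {n : ℕ} (hn : IsPiNumber π n) (hg : g ^ n ∈ piIsolator π S) : g ∈ piIsolator π S := by
  obtain ⟨m, hm, hgm⟩ := hg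
  exact ⟨n * m, hn.mul_s19 hm, by rwa [pow_mul]⟩

theorem QuotientGroup.eq_one_of_pow_eq_one_of_isPiNumber {G : Type*} [Group G] {π : Set ℕ}
    {K : Subgroup G} [K.Normal]
    (hK : ∀ (g : G) (n : ℕ), IsPiNumber π n → g ^ n ∈ K → g ∈ K)
    {q : G ⧸ K} {n : ℕ} (hn : IsPiNumber π n) (hq : q ^ n = 1) : q = 1 := by
  obtain ⟨g, rfl⟩ := QuotientGroup.mk_surjective q
  rw [← QuotientGroup.mk_pow, QuotientGroup.eq_one_iff] at hq
  exact (QuotientGroup.eq_one_iff g).mpr (hK g n hn hq)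

theorem quotient_by_isolator_pi_torsion_free_general (G : Type*) [Group G]
    (π : Set ℕ) (N : Subgroup G) (K : Subgroup G) (hKn : K.Normal)
    (hK : (K : Set G) = {g : G | ∃ n : ℕ, IsPiNumber π n ∧ g ^ n ∈ N}) :
    ∀ q : G ⧸ K, ∀ n : ℕ, IsPiNumber π n → q ^ n = 1 → q = 1 := by
  have hK_isolator : (K : Set G) = piIsolator π N := hK
  intro q n hn hq
  refine QuotientGroup.eq_one_of_pow_eq_one_of_isPiNumber (fun g m hm hg => ?_) hn hq
  rw [← SetLike.mem_coe, hK_isolator] at hg ⊢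
  exact mem_piIsolator_of_pow_mem hm hg

theorem quotient_by_isolator_pi_torsion_free (G : Type*) [Group G] [Group.IsNilpotent G]
    (π : Set ℕ) (N : Subgroup G) (hN : N.Normal) (K : Subgroup G) (hKn : K.Normal)
    (hK : (K : Set G) = {g : G | ∃ n : ℕ, IsPiNumber π n ∧ g ^ n ∈ N}) :
    ∀ q : G ⧸ K, ∀ n : ℕ, IsPiNumber π n → q ^ n = 1 → q = 1 :=
  quotient_by_isolator_pi_torsion_free_general G π N K hKn hK
end
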